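/- arXiv:1909.07049 — 5 statements merged into one kernel-verified Lean document; each statement's English description precedes it below -/
import Mathlib

section
/- For square invertible matrices A ∈ M_{n×n} and B ∈ M_{p×p}, the semi-tensor product A ⋉ B is invertible and (A ⋉ B)⁻¹ = B⁻¹ ⋉ A⁻¹. -/
open Matrix Kronecker

/-- Semi-tensor product of real matrices:
`A ⋉ B = (A ⊗ I_{t/n})(B ⊗ I_{t/p})` where `t = lcm(n,p)`. -/
noncomputable def stp {m n p q : ℕ} (A : Matrix (Fin m) (Fin n) ℝ)
    (B : Matrix (Fin p) (Fin q) ℝ) :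
    Matrix (Fin (m * (Nat.lcm n p / n))) (Fin (q * (Nat.lcm n p / p))) ℝ :=
  ((A ⊗ₖ (1 : Matrix (Fin (Nat.lcm n p / n)) (Fin (Nat.lcm n p / n)) ℝ)).reindex
      finProdFinEquiv
      (finProdFinEquiv.trans (finCongr (Nat.mul_div_cancel' (Nat.dvd_lcm_left n p))))) *
  ((B ⊗ₖ (1 : Matrix (Fin (Nat.lcm n p / p)) (Fin (Nat.lcm n p / p)) ℝ)).reindex
      (finProdFinEquiv.trans (finCongr (Nat.mul_div_cancel' (Nat.dvd_lcm_right n p))))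
      finProdFinEquiv)

/-- Changing the size of the identity factor in a Kronecker product under a
compatible reindexing. -/
lemma stp_kron_cast {p b b' t : ℕ} (M : Matrix (Fin p) (Fin p) ℝ)
    (h : p * b = t) (h' : p * b' = t) :
    (M ⊗ₖ (1 : Matrix (Fin b') (Fin b') ℝ)).submatrix (finProdFinEquiv.trans (finCongr h')).symm
      (finProdFinEquiv.trans (finCongr h')).symm
    = (M ⊗ₖ (1 : Matrix (Fin b) (Fin b) ℝ)).submatrix (finProdFinEquiv.trans (finCongr h)).symm
      (finProdFinEquiv.trans (finCongr h)).symm := by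
  rcases Nat.eq_zero_or_pos p with hp | hp
  · subst hp
    ext i j
    exact absurd i.isLt (by omega)
  · obtain rfl : b' = b := Nat.eq_of_mul_eq_mul_left hp (h'.trans h.symm)
    rfl

lemma stp_mul_eq_submatrix_mul {l m m' o : Type*} [Fintype m] [Fintype m']
    (M : Matrix l m' ℝ) (N : Matrix m' o ℝ) (e : m ≃ m') :
    M * N = M.submatrix _root_.id ⇑e * N.submatrix ⇑e _root_.id := by
  rw [Matrix.submatrix_mul_equiv, Matrix.submatrix_id_id]

/-- The key algebraic identity: the reindexed factors multiply to the identity. -/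
lemma stp_aux {n p a b t : ℕ} (A : Matrix (Fin n) (Fin n) ℝ) (B : Matrix (Fin p) (Fin p) ℝ)
    (hA : IsUnit A) (hB : IsUnit B)
    (e1 : Fin n × Fin a ≃ Fin t) (e2 : Fin p × Fin b ≃ Fin t) :
    ((A ⊗ₖ (1 : Matrix (Fin a) (Fin a) ℝ)).submatrix e1.symm e1.symm *
     (B ⊗ₖ (1 : Matrix (Fin b) (Fin b) ℝ)).submatrix e2.symm e2.symm) *
    ((B⁻¹ ⊗ₖ (1 : Matrix (Fin b) (Fin b) ℝ)).submatrix e2.symm e2.symm *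
     (A⁻¹ ⊗ₖ (1 : Matrix (Fin a) (Fin a) ℝ)).submatrix e1.symm e1.symm) = 1 := by
  have hAd := A.isUnit_iff_isUnit_det.mp hA
  have hBd := B.isUnit_iff_isUnit_det.mp hB
  have h2 : (B ⊗ₖ (1 : Matrix (Fin b) (Fin b) ℝ)).submatrix e2.symm e2.symm *
      (B⁻¹ ⊗ₖ (1 : Matrix (Fin b) (Fin b) ℝ)).submatrix e2.symm e2.symm = 1 := by
    rw [submatrix_mul_equiv, ← mul_kronecker_mul, mul_nonsing_inv _ hBd, Matrix.mul_one,
      one_kronecker_one, submatrix_one_equiv]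
  have h1 : (A ⊗ₖ (1 : Matrix (Fin a) (Fin a) ℝ)).submatrix e1.symm e1.symm *
      (A⁻¹ ⊗ₖ (1 : Matrix (Fin a) (Fin a) ℝ)).submatrix e1.symm e1.symm = 1 := by
    rw [submatrix_mul_equiv, ← mul_kronecker_mul, mul_nonsing_inv _ hAd, Matrix.mul_one,
      one_kronecker_one, submatrix_one_equiv]
  calc _ = (A ⊗ₖ (1 : Matrix (Fin a) (Fin a) ℝ)).submatrix e1.symm e1.symm *
      ((B ⊗ₖ (1 : Matrix (Fin b) (Fin b) ℝ)).submatrix e2.symm e2.symm *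
       (B⁻¹ ⊗ₖ (1 : Matrix (Fin b) (Fin b) ℝ)).submatrix e2.symm e2.symm) *
      (A⁻¹ ⊗ₖ (1 : Matrix (Fin a) (Fin a) ℝ)).submatrix e1.symm e1.symm := by
        simp only [Matrix.mul_assoc]
    _ = 1 := by rw [h2, Matrix.mul_one, h1]

/-- For square invertible `A ∈ M_{n×n}`, `B ∈ M_{p×p}`, the STP `A ⋉ B` (viewed as a square
matrix of size `lcm n p`) is invertible and `(A ⋉ B)⁻¹ = B⁻¹ ⋉ A⁻¹`. -/
theorem stp_inv {n p : ℕ} (A : Matrix (Fin n) (Fin n) ℝ) (B : Matrix (Fin p) (Fin p) ℝ)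
    (hA : IsUnit A) (hB : IsUnit B) :
    IsUnit ((stp A B).reindex
        (finCongr (Nat.mul_div_cancel' (Nat.dvd_lcm_left n p)))
        (finCongr (Nat.mul_div_cancel' (Nat.dvd_lcm_right n p)))) ∧
    ((stp A B).reindex
        (finCongr (Nat.mul_div_cancel' (Nat.dvd_lcm_left n p)))
        (finCongr (Nat.mul_div_cancel' (Nat.dvd_lcm_right n p))))⁻¹ =
      (stp B⁻¹ A⁻¹).reindex
        (finCongr (by rw [Nat.lcm_comm] at *; exact Nat.mul_div_cancel' (Nat.dvd_lcm_right n p)))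
        (finCongr (by rw [Nat.lcm_comm] at *; exact Nat.mul_div_cancel' (Nat.dvd_lcm_left n p))) := by
  have h1 : n * (Nat.lcm n p / n) = Nat.lcm n p := Nat.mul_div_cancel' (Nat.dvd_lcm_left n p)
  have h2 : p * (Nat.lcm n p / p) = Nat.lcm n p := Nat.mul_div_cancel' (Nat.dvd_lcm_right n p)
  have hb : p * (Nat.lcm p n / p) = Nat.lcm n p := by
    rw [Nat.lcm_comm p n]; exact h2
  have ha : n * (Nat.lcm p n / n) = Nat.lcm n p := by
    rw [Nat.lcm_comm p n]; exact h1
  have hS : (stp A B).reindex (finCongr h1) (finCongr h2) =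
      (A ⊗ₖ (1 : Matrix (Fin (Nat.lcm n p / n)) (Fin (Nat.lcm n p / n)) ℝ)).submatrix
        (finProdFinEquiv.trans (finCongr h1)).symm (finProdFinEquiv.trans (finCongr h1)).symm *
      (B ⊗ₖ (1 : Matrix (Fin (Nat.lcm n p / p)) (Fin (Nat.lcm n p / p)) ℝ)).submatrix
        (finProdFinEquiv.trans (finCongr h2)).symm (finProdFinEquiv.trans (finCongr h2)).symm := by
    rw [stp, reindex_apply, reindex_apply, reindex_apply,
      Matrix.submatrix_mul _ _ _ _root_.id _ Function.bijective_id, submatrix_submatrix,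
      submatrix_submatrix]
    rfl
  have hR' : (stp B⁻¹ A⁻¹).reindex (finCongr hb) (finCongr ha) =
      (B⁻¹ ⊗ₖ (1 : Matrix (Fin (Nat.lcm p n / p)) (Fin (Nat.lcm p n / p)) ℝ)).submatrix
        (finProdFinEquiv.trans (finCongr hb)).symm (finProdFinEquiv.trans (finCongr hb)).symm *
      (A⁻¹ ⊗ₖ (1 : Matrix (Fin (Nat.lcm p n / n)) (Fin (Nat.lcm p n / n)) ℝ)).submatrix
        (finProdFinEquiv.trans (finCongr ha)).symm (finProdFinEquiv.trans (finCongr ha)).symm := by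
    rw [stp, reindex_apply, reindex_apply, reindex_apply,
      Matrix.submatrix_mul _ _ _ _root_.id _ Function.bijective_id, submatrix_submatrix,
      submatrix_submatrix, stp_mul_eq_submatrix_mul _ _ (finCongr (Nat.lcm_comm n p)),
      submatrix_submatrix, submatrix_submatrix]
    rfl
  have hR : (stp B⁻¹ A⁻¹).reindex (finCongr hb) (finCongr ha) =
      (B⁻¹ ⊗ₖ (1 : Matrix (Fin (Nat.lcm n p / p)) (Fin (Nat.lcm n p / p)) ℝ)).submatrix
        (finProdFinEquiv.trans (finCongr h2)).symm (finProdFinEquiv.trans (finCongr h2)).symm *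
      (A⁻¹ ⊗ₖ (1 : Matrix (Fin (Nat.lcm n p / n)) (Fin (Nat.lcm n p / n)) ℝ)).submatrix
        (finProdFinEquiv.trans (finCongr h1)).symm (finProdFinEquiv.trans (finCongr h1)).symm := by
    rw [hR', stp_kron_cast B⁻¹ h2 hb, stp_kron_cast A⁻¹ h1 ha]
  have hSR : (stp A B).reindex (finCongr h1) (finCongr h2) *
      (stp B⁻¹ A⁻¹).reindex (finCongr hb) (finCongr ha) = 1 := by
    rw [hS, hR]
    exact stp_aux A B hA hB _ _
  have hRS : (stp B⁻¹ A⁻¹).reindex (finCongr hb) (finCongr ha) *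
      (stp A B).reindex (finCongr h1) (finCongr h2) = 1 :=
    mul_eq_one_comm.mp hSR
  exact ⟨⟨⟨_, _, hSR, hRS⟩, rfl⟩, Matrix.inv_eq_right_inv hSR⟩
end

section
/- The semi-tensor product is associative: (A ⋉ B) ⋉ C = A ⋉ (B ⋉ C) for all real matrices A, B, C. -/
/-!
Each factor of a semi-tensor product is a Kronecker product `X ⊗ I_k`. Since
`(X ⊗ I_a) ⊗ I_b = X ⊗ I_(ab)` and `(XY) ⊗ I_k = (X ⊗ I_k)(Y ⊗ I_k)`, both `(A ⋉ B) ⋉ C` and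
`A ⋉ (B ⋉ C)` expand to a product `(A ⊗ I_a)(B ⊗ I_b)(C ⊗ I_c)`, and the two triples `(a, b, c)`
coincide because of the lcm identity
`q · lcm(n, p · lcm(q,u)/q) = lcm(qn, qp, pu) = p · lcm(q · lcm(n,p)/p, u)`.
-/

open Matrix Kronecker

namespace Matrix

variable {R : Type*}

/-- Matrices whose sizes agree only propositionally are compared through their zero-extended
entries, which do not see casts of the index types. -/
def natEntry [Zero R] {m n : ℕ} (M : Matrix (Fin m) (Fin n) R) (i j : ℕ) : R :=
  if h : i < m ∧ j < n then M ⟨i, h.1⟩ ⟨j, h.2⟩ else 0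

def natMul [Mul R] [AddCommMonoid R] (k : ℕ) (F G : ℕ → ℕ → R) (i j : ℕ) : R :=
  ∑ l ∈ Finset.range k, F i l * G l j

theorem natMul_assoc [NonUnitalSemiring R] (k l : ℕ) (F G H : ℕ → ℕ → R) :
    natMul l (natMul k F G) H = natMul k F (natMul l G H) := by
  ext i j
  simp only [natMul, Finset.sum_mul, Finset.mul_sum, mul_assoc]
  exact Finset.sum_comm

theorem natEntry_mul [NonUnitalNonAssocSemiring R] {m n q : ℕ} (M : Matrix (Fin m) (Fin n) R)
    (N : Matrix (Fin n) (Fin q) R) : natEntry (M * N) = natMul n (natEntry M) (natEntry N) := by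
  ext i j
  rw [natMul, Finset.sum_range]
  by_cases hi : i < m <;> by_cases hj : j < q <;> simp [natEntry, mul_apply, hi, hj]

theorem natEntry_reindex_congr [Zero R] {ι κ : Type*} {a b a' b' : ℕ} (N : Matrix ι κ R)
    (e₁ : ι ≃ Fin a) (e₂ : κ ≃ Fin b) (e₁' : ι ≃ Fin a') (e₂' : κ ≃ Fin b')
    (ha : a = a') (hb : b = b') (h₁ : ∀ i, (e₁ i : ℕ) = e₁' i) (h₂ : ∀ j, (e₂ j : ℕ) = e₂' j) :
    natEntry (N.reindex e₁ e₂) = natEntry (N.reindex e₁' e₂') := by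
  subst ha hb
  obtain rfl : e₁ = e₁' := Equiv.ext fun i => Fin.ext (h₁ i)
  obtain rfl : e₂ = e₂' := Equiv.ext fun j => Fin.ext (h₂ j)
  rfl

theorem natEntry_reindex_finCongr [Zero R] {m n m' n' : ℕ} (M : Matrix (Fin m) (Fin n) R)
    (hm : m = m') (hn : n = n') :
    natEntry (M.reindex (finCongr hm) (finCongr hn)) = natEntry M := by
  subst hm hn
  rfl

theorem eq_reindex_of_natEntry_eq [Zero R] {a b c d : ℕ} {M : Matrix (Fin a) (Fin b) R}
    {N : Matrix (Fin c) (Fin d) R} (h₁ : c = a) (h₂ : d = b) (h : natEntry M = natEntry N) :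
    M = N.reindex (finCongr h₁) (finCongr h₂) := by
  subst h₁ h₂
  ext i j
  simpa [natEntry] using congrFun (congrFun h i) j

def kronOne [MulZeroOneClass R] {m n : ℕ} (M : Matrix (Fin m) (Fin n) R) (k : ℕ) :
    Matrix (Fin (m * k)) (Fin (n * k)) R :=
  (M ⊗ₖ (1 : Matrix (Fin k) (Fin k) R)).reindex finProdFinEquiv finProdFinEquiv

theorem kronOne_mul [CommSemiring R] {m n q : ℕ} (M : Matrix (Fin m) (Fin n) R)
    (N : Matrix (Fin n) (Fin q) R) (k : ℕ) : kronOne (M * N) k = kronOne M k * kronOne N k := by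
  simp only [kronOne, reindex_apply, submatrix_mul_equiv, ← mul_kronecker_mul, mul_one]

theorem natEntry_kronOne_kronOne [MonoidWithZero R] {m n : ℕ} (M : Matrix (Fin m) (Fin n) R)
    (a b : ℕ) : natEntry (kronOne (kronOne M a) b) = natEntry (kronOne M (a * b)) := by
  have hL : kronOne (kronOne M a) b = (M ⊗ₖ (1 : Matrix (Fin a × Fin b) (Fin a × Fin b) R)).reindex
      ((Equiv.prodAssoc _ _ _).symm.trans
        ((finProdFinEquiv.prodCongr (Equiv.refl _)).trans finProdFinEquiv))
      ((Equiv.prodAssoc _ _ _).symm.trans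
        ((finProdFinEquiv.prodCongr (Equiv.refl _)).trans finProdFinEquiv)) := by
    rw [← one_kronecker_one, ← kronecker_assoc]
    rfl
  have hR : kronOne M (a * b) = (M ⊗ₖ (1 : Matrix (Fin a × Fin b) (Fin a × Fin b) R)).reindex
      (((Equiv.refl _).prodCongr finProdFinEquiv).trans finProdFinEquiv)
      (((Equiv.refl _).prodCongr finProdFinEquiv).trans finProdFinEquiv) := by
    rw [kronOne, ← submatrix_one_equiv finProdFinEquiv.symm]
    rfl
  rw [hL, hR]
  refine natEntry_reindex_congr _ _ _ _ _ (mul_assoc _ _ _) (mul_assoc _ _ _) ?_ ?_ <;>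
  · rintro ⟨x, y, z⟩
    simp only [Equiv.trans_apply, Equiv.prodAssoc_symm_apply, Equiv.prodCongr_apply, Prod.map,
      Equiv.coe_refl, id_eq, finProdFinEquiv_apply_val]
    ring

theorem kronOne_reindex_finCongr [MulZeroOneClass R] {m n m' n' : ℕ}
    (M : Matrix (Fin m) (Fin n) R) (hm : m = m') (hn : n = n') (k : ℕ) :
    kronOne (M.reindex (finCongr hm) (finCongr hn)) k
      = (kronOne M k).reindex (finCongr (congrArg (· * k) hm))
          (finCongr (congrArg (· * k) hn)) := by
  subst hm hn
  rfl

end Matrix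

theorem stp_eq_mul {m n p q : ℕ} (A : Matrix (Fin m) (Fin n) ℝ) (B : Matrix (Fin p) (Fin q) ℝ) :
    stp A B = (kronOne A (Nat.lcm n p / n)).reindex (finCongr rfl)
        (finCongr (Nat.mul_div_cancel' (Nat.dvd_lcm_left n p))) *
      (kronOne B (Nat.lcm n p / p)).reindex
        (finCongr (Nat.mul_div_cancel' (Nat.dvd_lcm_right n p))) (finCongr rfl) :=
  rfl

theorem natEntry_stp {m n p q : ℕ} (A : Matrix (Fin m) (Fin n) ℝ) (B : Matrix (Fin p) (Fin q) ℝ) :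
    natEntry (stp A B) = natMul (n * (Nat.lcm n p / n))
      (natEntry (kronOne A (Nat.lcm n p / n))) (natEntry (kronOne B (Nat.lcm n p / p))) := by
  rw [stp_eq_mul, natEntry_mul, natEntry_reindex_finCongr, natEntry_reindex_finCongr]
  congr 1
  exact (Nat.mul_div_cancel' (Nat.dvd_lcm_left n p)).symm

theorem natEntry_kronOne_stp {m n p q : ℕ} (A : Matrix (Fin m) (Fin n) ℝ)
    (B : Matrix (Fin p) (Fin q) ℝ) (k : ℕ) :
    natEntry (kronOne (stp A B) k) = natMul (n * (Nat.lcm n p / n * k))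
      (natEntry (kronOne A (Nat.lcm n p / n * k)))
      (natEntry (kronOne B (Nat.lcm n p / p * k))) := by
  rw [stp_eq_mul, kronOne_mul, natEntry_mul, kronOne_reindex_finCongr, kronOne_reindex_finCongr,
    natEntry_reindex_finCongr, natEntry_reindex_finCongr, natEntry_kronOne_kronOne,
    natEntry_kronOne_kronOne]
  congr 1
  rw [← mul_assoc, Nat.mul_div_cancel' (Nat.dvd_lcm_left n p)]

theorem mul_lcm_mul_lcm_div_comm (n p q u : ℕ) :
    q * Nat.lcm n (p * (Nat.lcm q u / q)) = p * Nat.lcm (q * (Nat.lcm n p / p)) u := by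
  have hL : q * Nat.lcm n (p * (Nat.lcm q u / q)) = Nat.lcm (q * n) (Nat.lcm (p * q) (p * u)) := by
    rw [← Nat.lcm_mul_left, mul_left_comm, Nat.mul_div_cancel' (Nat.dvd_lcm_left q u),
      Nat.lcm_mul_left]
  have hR : p * Nat.lcm (q * (Nat.lcm n p / p)) u = Nat.lcm (Nat.lcm (q * n) (q * p)) (p * u) := by
    rw [← Nat.lcm_mul_left, mul_left_comm, Nat.mul_div_cancel' (Nat.dvd_lcm_right n p),
      Nat.lcm_mul_left]
  rw [hL, hR, Nat.lcm_assoc, mul_comm p q]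

theorem stp_assoc_identity_sizes_of_pos {n p q u : ℕ} (hn : 0 < n) (hp : 0 < p) (hq : 0 < q)
    (hu : 0 < u) :
    Nat.lcm n p / n * (Nat.lcm (q * (Nat.lcm n p / p)) u / (q * (Nat.lcm n p / p)))
        = Nat.lcm n (p * (Nat.lcm q u / q)) / n ∧
      Nat.lcm q u / q * (Nat.lcm n (p * (Nat.lcm q u / q)) / (p * (Nat.lcm q u / q)))
        = Nat.lcm n p / p * (Nat.lcm (q * (Nat.lcm n p / p)) u / (q * (Nat.lcm n p / p))) ∧
      Nat.lcm q u / u * (Nat.lcm n (p * (Nat.lcm q u / q)) / (p * (Nat.lcm q u / q)))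
        = Nat.lcm (q * (Nat.lcm n p / p)) u / u := by
  have key := mul_lcm_mul_lcm_div_comm n p q u
  set α := Nat.lcm n p / n
  set β := Nat.lcm n p / p
  set α' := Nat.lcm q u / q
  set β' := Nat.lcm q u / u
  set T := Nat.lcm n (p * α')
  set S := Nat.lcm (q * β) u
  set z := T / n
  set w := T / (p * α')
  set x := S / (q * β)
  set y := S / u
  have hα : n * α = Nat.lcm n p := Nat.mul_div_cancel' (Nat.dvd_lcm_left n p)
  have hβ : p * β = Nat.lcm n p := Nat.mul_div_cancel' (Nat.dvd_lcm_right n p)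
  have hα' : q * α' = Nat.lcm q u := Nat.mul_div_cancel' (Nat.dvd_lcm_left q u)
  have hβ' : u * β' = Nat.lcm q u := Nat.mul_div_cancel' (Nat.dvd_lcm_right q u)
  have hz : n * z = T := Nat.mul_div_cancel' (Nat.dvd_lcm_left _ _)
  have hw : p * α' * w = T := Nat.mul_div_cancel' (Nat.dvd_lcm_right _ _)
  have hx : q * β * x = S := Nat.mul_div_cancel' (Nat.dvd_lcm_left _ _)
  have hy : u * y = S := Nat.mul_div_cancel' (Nat.dvd_lcm_right _ _)
  have hβpos : 0 < β := pos_of_mul_pos_right (hβ ▸ Nat.lcm_pos hn hp) hp.le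
  have hα'pos : 0 < α' := pos_of_mul_pos_right (hα' ▸ Nat.lcm_pos hq hu) hq.le
  refine ⟨Nat.eq_of_mul_eq_mul_left (by positivity : 0 < n * (q * β)) ?_,
    Nat.eq_of_mul_eq_mul_left (by positivity : 0 < p * q) ?_,
    Nat.eq_of_mul_eq_mul_left (by positivity : 0 < u * (p * α')) ?_⟩
  · calc n * (q * β) * (α * x) = (n * α) * (q * β * x) := by ring
      _ = β * (p * S) := by rw [hα, hx, ← hβ]; ring
      _ = q * β * (n * z) := by rw [← key, hz]; ring
      _ = n * (q * β) * z := by ring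
  · calc p * q * (α' * w) = q * (p * α' * w) := by ring
      _ = p * (q * β * x) := by rw [hw, hx, key]
      _ = p * q * (β * x) := by ring
  · calc u * (p * α') * (β' * w) = u * β' * (p * α' * w) := by ring
      _ = α' * (p * (u * y)) := by rw [hβ', ← hα', hw, hy, ← key]; ring
      _ = u * (p * α') * y := by ring

theorem stp_assoc_identity_sizes (n p q u : ℕ) :
    Nat.lcm n p / n * (Nat.lcm (q * (Nat.lcm n p / p)) u / (q * (Nat.lcm n p / p)))
        = Nat.lcm n (p * (Nat.lcm q u / q)) / n ∧
      Nat.lcm q u / q * (Nat.lcm n (p * (Nat.lcm q u / q)) / (p * (Nat.lcm q u / q)))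
        = Nat.lcm n p / p * (Nat.lcm (q * (Nat.lcm n p / p)) u / (q * (Nat.lcm n p / p))) ∧
      Nat.lcm q u / u * (Nat.lcm n (p * (Nat.lcm q u / q)) / (p * (Nat.lcm q u / q)))
        = Nat.lcm (q * (Nat.lcm n p / p)) u / u := by
  obtain rfl | hn := n.eq_zero_or_pos
  · simp
  obtain rfl | hp := p.eq_zero_or_pos
  · simp
  obtain rfl | hq := q.eq_zero_or_pos
  · simp
  obtain rfl | hu := u.eq_zero_or_pos
  · simp
  exact stp_assoc_identity_sizes_of_pos hn hp hq hu

/-- Associativity of the semi-tensor product: `(A ⋉ B) ⋉ C = A ⋉ (B ⋉ C)`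
(the two sides have the same dimensions, and are equal up to the canonical
identification of the index types). -/
theorem stp_assoc {m n p q u v : ℕ} (A : Matrix (Fin m) (Fin n) ℝ)
    (B : Matrix (Fin p) (Fin q) ℝ) (C : Matrix (Fin u) (Fin v) ℝ) :
    ∃ (hr : m * (Nat.lcm n (p * (Nat.lcm q u / q)) / n) =
            (m * (Nat.lcm n p / n)) *
              (Nat.lcm (q * (Nat.lcm n p / p)) u / (q * (Nat.lcm n p / p))))
      (hc : (v * (Nat.lcm q u / u)) *
              (Nat.lcm n (p * (Nat.lcm q u / q)) / (p * (Nat.lcm q u / q))) =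
            v * (Nat.lcm (q * (Nat.lcm n p / p)) u / u)),
      stp (stp A B) C = (stp A (stp B C)).reindex (finCongr hr) (finCongr hc) := by
  obtain ⟨hA, hB, hC⟩ := stp_assoc_identity_sizes n p q u
  refine ⟨by rw [mul_assoc, hA], by rw [mul_assoc, hC], eq_reindex_of_natEntry_eq _ _ ?_⟩
  rw [natEntry_stp, natEntry_kronOne_stp, natEntry_stp, natEntry_kronOne_stp, hA, hB, hC,
    natMul_assoc, mul_assoc q]
end

section
/- Every function f : D^n → D on the two-element set D = {0,1}, expressed in vector form via 1 ↦ δ_2^1 and 0 ↦ δ_2^2, admits a unique logical matrix M_f ∈ L_{2×2^n} such that f(x_1,...,x_n) = M_f ⋉ x_1 ⋉ ... ⋉ x_n for all x_i ∈ Δ_2. -/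
open Matrix

/-- A logical matrix: every column is a standard basis vector. -/
def IsLogical {I J : Type*} [DecidableEq I] (M : Matrix I J ℝ) : Prop :=
  ∀ j, ∃ i₀, ∀ i, M i j = if i = i₀ then (1 : ℝ) else 0

/-- Vector form of a Boolean value: `1 ↦ δ_2^1`, `0 ↦ δ_2^2`. -/
def vecB (b : Bool) : Fin 2 → ℝ :=
  fun r => if r = (if b then (0 : Fin 2) else 1) then 1 else 0

lemma mulVec_ite_eq_col {m n R : Type*} [Fintype n] [DecidableEq n] [NonAssocSemiring R]
    (M : Matrix m n R) (j : n) :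
    M *ᵥ (fun w => if w = j then (1 : R) else 0) = M.col j := by
  rw [← mulVec_single_one]
  congr 1
  ext w
  rw [Pi.single_apply]

lemma isLogical_of_vecB {J : Type*} (g : J → Bool) :
    IsLogical (Matrix.of fun r j => vecB (g j) r) :=
  fun j => ⟨if g j then 0 else 1, fun _ => rfl⟩

/-- Every `f : D^n → D` admits a unique logical matrix `M_f ∈ L_{2×2^n}` (columns
indexed by assignments `Fin n → Bool`, identified with `Fin (2^n)`) such that in
vector form `f(x_1,…,x_n) = M_f ⋉ x_1 ⋉ ⋯ ⋉ x_n`; here `x_1 ⋉ ⋯ ⋉ x_n` is the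
Kronecker product of the δ-vectors of the arguments, i.e. the δ-vector at the
assignment `v`. -/
theorem exists_unique_structure_matrix (n : ℕ) (f : (Fin n → Bool) → Bool) :
    ∃! M : Matrix (Fin 2) (Fin n → Bool) ℝ,
      IsLogical M ∧
      ∀ v : Fin n → Bool,
        M.mulVec (fun w => if w = v then (1 : ℝ) else 0) = vecB (f v) := by
  refine ⟨Matrix.of fun r v => vecB (f v) r, ⟨isLogical_of_vecB f, fun v => ?_⟩, ?_⟩
  · rw [mulVec_ite_eq_col]
    rfl
  · rintro M ⟨-, hM⟩
    ext r v
    simpa only [mulVec_ite_eq_col, col_apply, of_apply] using congr_fun (hM v) r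
end

section
/- Let (B, ⊓, ⊔) be identified with Δ_k with structure matrices M_c, M_d ∈ L_{k×k²}. The absorption law x ⊓ (x ⊔ y) = x holds for all x, y ∈ Δ_k if and only if M_c (I_k ⊗ M_d) PR_k = I_k ⊗ 1_k^T, where PR_k is the power-reducing matrix and 1_k is the all-ones column vector. -/
open Matrix Kronecker

/-- The power-reducing matrix `PR_k ∈ M_{k²×k}`: its `i`-th column is `δ_k^i ⊗ δ_k^i`. -/
def PR (k : ℕ) : Matrix (Fin k × Fin k) (Fin k) ℝ :=
  Matrix.of fun r c => if r.1 = c ∧ r.2 = c then (1 : ℝ) else 0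

theorem absorption_entry (k : ℕ)
    (inf sup : Fin k → Fin k → Fin k)
    (Mc Md : Matrix (Fin k) (Fin k × Fin k) ℝ)
    (hMc : ∀ x y i, Mc i (x, y) = if i = inf x y then (1 : ℝ) else 0)
    (hMd : ∀ x y i, Md i (x, y) = if i = sup x y then (1 : ℝ) else 0)
    (i a b : Fin k) :
    (Mc * (((1 : Matrix (Fin k) (Fin k) ℝ) ⊗ₖ Md).submatrix id
            (Equiv.prodAssoc (Fin k) (Fin k) (Fin k))) *
          (PR k ⊗ₖ (1 : Matrix (Fin k) (Fin k) ℝ))) i (a, b) =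
      if i = inf a (sup a b) then 1 else 0 := by
  simp only [Matrix.mul_apply, Matrix.submatrix_apply, Matrix.kroneckerMap_apply,
    Matrix.one_apply, PR, Matrix.of_apply, Equiv.prodAssoc_apply, id_eq, hMc, hMd]
  simp only [Fintype.sum_prod_type, mul_ite, ite_mul, one_mul, zero_mul, mul_one, mul_zero,
    Finset.sum_ite_eq, Finset.sum_ite_eq', Finset.mem_univ, if_true, and_comm]
  simp only [ite_and, Finset.sum_ite_eq, Finset.mem_univ, if_true]
  simp [Finset.sum_ite_eq, eq_comm]

/-- For `⊓, ⊔` on `Δ_k` with structure matrices `M_c, M_d`, the absorption law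
`x ⊓ (x ⊔ y) = x` holds for all `x, y ∈ Δ_k` iff
`M_c (I_k ⊗ M_d) PR_k = I_k ⊗ 1_k^T` (the semi-tensor product with `PR_k`
being the conventional product with `PR_k ⊗ I_k`). -/
theorem absorption_iff_structure_matrix (k : ℕ)
    (inf sup : Fin k → Fin k → Fin k)
    (Mc Md : Matrix (Fin k) (Fin k × Fin k) ℝ)
    (hMc : ∀ x y i, Mc i (x, y) = if i = inf x y then (1 : ℝ) else 0)
    (hMd : ∀ x y i, Md i (x, y) = if i = sup x y then (1 : ℝ) else 0) :
    (∀ x y, inf x (sup x y) = x) ↔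
      Mc * (((1 : Matrix (Fin k) (Fin k) ℝ) ⊗ₖ Md).submatrix id
            (Equiv.prodAssoc (Fin k) (Fin k) (Fin k))) *
          (PR k ⊗ₖ (1 : Matrix (Fin k) (Fin k) ℝ)) =
        ((1 : Matrix (Fin k) (Fin k) ℝ) ⊗ₖ
            (Matrix.of fun (_ : Fin 1) (_ : Fin k) => (1 : ℝ))).submatrix
          (fun r : Fin k => (r, (0 : Fin 1))) id := by
  have hrhs : ∀ i a b : Fin k,
      (((1 : Matrix (Fin k) (Fin k) ℝ) ⊗ₖ
            (Matrix.of fun (_ : Fin 1) (_ : Fin k) => (1 : ℝ))).submatrix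
          (fun r : Fin k => (r, (0 : Fin 1))) id) i (a, b)
        = if i = a then 1 else 0 := by
    intro i a b
    simp [Matrix.one_apply]
  constructor
  · intro h
    ext i ⟨a, b⟩
    rw [absorption_entry k inf sup Mc Md hMc hMd, hrhs, h a b]
  · intro h x y
    have := congrFun (congrFun h (inf x (sup x y))) (x, y)
    rw [absorption_entry k inf sup Mc Md hMc hMd, hrhs, if_pos rfl] at this
    by_contra hne
    rw [if_neg hne] at this
    exact one_ne_zero this
end

section
/- Let M_n ∈ L_{pq×pq} be a logical matrix. There exist logical matrices M_n^1 ∈ L_{p×p} and M_n^2 ∈ L_{q×q} with M_n = M_n^1 ⊗ M_n^2 — equivalently satisfying (I_p ⊗ 1_q^T) M_n = M_n^1 (I_p ⊗ 1_q^T) and (1_p^T ⊗ I_q) M_n = M_n^2 (1_p^T ⊗ I_q) — if and only if (I_p ⊗ 1_q^T) M_n [I_{pq} − (1/q)(I_p ⊗ 1_{q×q})] = 0 and (1_p^T ⊗ I_q) M_n [I_{pq} − (1/p)(1_{p×p} ⊗ I_q)] = 0; moreover in that case M_n^1 = (1/q)(I_p ⊗ 1_q^T) M_n (I_p ⊗ 1_q)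 and M_n^2 = (1/p)(1_p^T ⊗ I_q) M_n (1_p ⊗ I_q). -/
open Matrix Kronecker

/-- `I_p ⊗ 1_q^T ∈ M_{p×pq}`. -/
def idKronOnesRow (p q : ℕ) : Matrix (Fin p) (Fin p × Fin q) ℝ :=
  ((1 : Matrix (Fin p) (Fin p) ℝ) ⊗ₖ
      (Matrix.of fun (_ : Fin 1) (_ : Fin q) => (1 : ℝ))).submatrix
    (fun r : Fin p => (r, (0 : Fin 1))) id

/-- `1_p^T ⊗ I_q ∈ M_{q×pq}`. -/
def onesRowKronId (p q : ℕ) : Matrix (Fin q) (Fin p × Fin q) ℝ :=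
  ((Matrix.of fun (_ : Fin 1) (_ : Fin p) => (1 : ℝ)) ⊗ₖ
      (1 : Matrix (Fin q) (Fin q) ℝ)).submatrix
    (fun r : Fin q => ((0 : Fin 1), r)) id

/-- `I_p ⊗ 1_q ∈ M_{pq×p}`. -/
def idKronOnesCol (p q : ℕ) : Matrix (Fin p × Fin q) (Fin p) ℝ :=
  ((1 : Matrix (Fin p) (Fin p) ℝ) ⊗ₖ
      (Matrix.of fun (_ : Fin q) (_ : Fin 1) => (1 : ℝ))).submatrix
    id (fun c : Fin p => (c, (0 : Fin 1)))

/-- `1_p ⊗ I_q ∈ M_{pq×q}`. -/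
def onesColKronId (p q : ℕ) : Matrix (Fin p × Fin q) (Fin q) ℝ :=
  ((Matrix.of fun (_ : Fin p) (_ : Fin 1) => (1 : ℝ)) ⊗ₖ
      (1 : Matrix (Fin q) (Fin q) ℝ)).submatrix
    id (fun c : Fin q => ((0 : Fin 1), c))

lemma idKronOnesRow_apply (p q : ℕ) (r : Fin p) (x : Fin p × Fin q) :
    idKronOnesRow p q r x = if r = x.1 then 1 else 0 := by
  simp [idKronOnesRow, Matrix.kroneckerMap_apply, Matrix.one_apply]

lemma onesRowKronId_apply (p q : ℕ) (r : Fin q) (x : Fin p × Fin q) :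
    onesRowKronId p q r x = if r = x.2 then 1 else 0 := by
  simp [onesRowKronId, Matrix.kroneckerMap_apply, Matrix.one_apply]

lemma idKronOnesCol_apply (p q : ℕ) (x : Fin p × Fin q) (c : Fin p) :
    idKronOnesCol p q x c = if x.1 = c then 1 else 0 := by
  simp [idKronOnesCol, Matrix.kroneckerMap_apply, Matrix.one_apply]

lemma onesColKronId_apply (p q : ℕ) (x : Fin p × Fin q) (c : Fin q) :
    onesColKronId p q x c = if x.2 = c then 1 else 0 := by
  simp [onesColKronId, Matrix.kroneckerMap_apply, Matrix.one_apply]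

lemma row_kill_q (p q : ℕ) :
    idKronOnesRow p q * ((1 : Matrix (Fin p) (Fin p) ℝ) ⊗ₖ
      (Matrix.of fun (_ _ : Fin q) => (1 : ℝ))) = (q : ℝ) • idKronOnesRow p q := by
  ext r x
  simp [Matrix.mul_apply, idKronOnesRow_apply, Matrix.kroneckerMap_apply, Matrix.one_apply,
    Fintype.sum_prod_type, ite_and]
  split <;> simp

lemma row_kill_p (p q : ℕ) :
    onesRowKronId p q * ((Matrix.of fun (_ _ : Fin p) => (1 : ℝ)) ⊗ₖ
      (1 : Matrix (Fin q) (Fin q) ℝ)) = (p : ℝ) • onesRowKronId p q := by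
  ext r x
  simp [Matrix.mul_apply, onesRowKronId_apply, Matrix.kroneckerMap_apply, Matrix.one_apply,
    Fintype.sum_prod_type, ite_and]
  split <;> simp

lemma row_mul_col_q (p q : ℕ) :
    idKronOnesRow p q * idKronOnesCol p q = (q : ℝ) • 1 := by
  ext r c
  simp [Matrix.mul_apply, idKronOnesRow_apply, idKronOnesCol_apply,
    Fintype.sum_prod_type, Matrix.one_apply, ite_and]
  split <;> simp

lemma row_mul_col_p (p q : ℕ) :
    onesRowKronId p q * onesColKronId p q = (p : ℝ) • 1 := by
  ext r c
  simp [Matrix.mul_apply, onesRowKronId_apply, onesColKronId_apply,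
    Fintype.sum_prod_type, Matrix.one_apply, ite_and]
  split <;> simp

/-- A logical matrix `M_n ∈ L_{pq×pq}` decomposes as `M_n = M_n^1 ⊗ M_n^2` with
`M_n^1 ∈ L_{p×p}`, `M_n^2 ∈ L_{q×q}` — equivalently
`(I_p ⊗ 1_q^T) M_n = M_n^1 (I_p ⊗ 1_q^T)` and `(1_p^T ⊗ I_q) M_n = M_n^2 (1_p^T ⊗ I_q)` —
iff `(I_p ⊗ 1_q^T) M_n [I_{pq} − (1/q)(I_p ⊗ 1_{q×q})] = 0` and
`(1_p^T ⊗ I_q) M_n [I_{pq} − (1/p)(1_{p×p} ⊗ I_q)] = 0`; and in that case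
`M_n^1 = (1/q)(I_p ⊗ 1_q^T) M_n (I_p ⊗ 1_q)` and
`M_n^2 = (1/p)(1_p^T ⊗ I_q) M_n (1_p ⊗ I_q)`. -/
theorem decomposition_iff (p q : ℕ) (hp : 0 < p) (hq : 0 < q)
    (Mn : Matrix (Fin p × Fin q) (Fin p × Fin q) ℝ) (hMn : IsLogical Mn) :
    ((∃ (Mn1 : Matrix (Fin p) (Fin p) ℝ) (Mn2 : Matrix (Fin q) (Fin q) ℝ),
        IsLogical Mn1 ∧ IsLogical Mn2 ∧ Mn = Mn1 ⊗ₖ Mn2 ∧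
        idKronOnesRow p q * Mn = Mn1 * idKronOnesRow p q ∧
        onesRowKronId p q * Mn = Mn2 * onesRowKronId p q) ↔
      (idKronOnesRow p q * Mn *
          (1 - (q : ℝ)⁻¹ • ((1 : Matrix (Fin p) (Fin p) ℝ) ⊗ₖ
            (Matrix.of fun (_ _ : Fin q) => (1 : ℝ)))) = 0 ∧
       onesRowKronId p q * Mn *
          (1 - (p : ℝ)⁻¹ • ((Matrix.of fun (_ _ : Fin p) => (1 : ℝ)) ⊗ₖ
            (1 : Matrix (Fin q) (Fin q) ℝ))) = 0)) ∧
    (∀ (Mn1 : Matrix (Fin p) (Fin p) ℝ) (Mn2 : Matrix (Fin q) (Fin q) ℝ),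
      IsLogical Mn1 → IsLogical Mn2 → Mn = Mn1 ⊗ₖ Mn2 →
      idKronOnesRow p q * Mn = Mn1 * idKronOnesRow p q →
      onesRowKronId p q * Mn = Mn2 * onesRowKronId p q →
      Mn1 = (q : ℝ)⁻¹ • (idKronOnesRow p q * Mn * idKronOnesCol p q) ∧
      Mn2 = (p : ℝ)⁻¹ • (onesRowKronId p q * Mn * onesColKronId p q)) := by
  classical
  have hq' : (q : ℝ) ≠ 0 := Nat.cast_ne_zero.mpr hq.ne'
  have hp' : (p : ℝ) ≠ 0 := Nat.cast_ne_zero.mpr hp.ne'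
  obtain ⟨φ, hφ⟩ : ∃ φ : Fin p × Fin q → Fin p × Fin q,
      ∀ x i, Mn i x = if i = φ x then 1 else 0 := by
    choose φ hφ using hMn
    exact ⟨φ, hφ⟩
  have hA : ∀ (r : Fin p) (x : Fin p × Fin q),
      (idKronOnesRow p q * Mn) r x = if r = (φ x).1 then 1 else 0 := by
    intro r x
    simp [Matrix.mul_apply, idKronOnesRow_apply, hφ, Fintype.sum_prod_type,
      Prod.ext_iff, ite_and]
  have hB : ∀ (s : Fin q) (x : Fin p × Fin q),
      (onesRowKronId p q * Mn) s x = if s = (φ x).2 then 1 else 0 := by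
    intro s x
    simp [Matrix.mul_apply, onesRowKronId_apply, hφ, Fintype.sum_prod_type,
      Prod.ext_iff, ite_and]
  constructor
  · constructor
    · rintro ⟨Mn1, Mn2, _, _, _, hE1, hE2⟩
      constructor
      · rw [hE1, Matrix.mul_sub, Matrix.mul_one, Matrix.mul_smul, Matrix.mul_assoc,
          row_kill_q, Matrix.mul_smul, smul_smul, inv_mul_cancel₀ hq', one_smul, sub_self]
      · rw [hE2, Matrix.mul_sub, Matrix.mul_one, Matrix.mul_smul, Matrix.mul_assoc,
          row_kill_p, Matrix.mul_smul, smul_smul, inv_mul_cancel₀ hp', one_smul, sub_self]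
    · rintro ⟨h1, h2⟩
      rw [Matrix.mul_sub, Matrix.mul_one, Matrix.mul_smul, sub_eq_zero] at h1 h2
      -- constancy of the first coordinate in b
      have hf : ∀ (a : Fin p) (b b' : Fin q), (φ (a, b)).1 = (φ (a, b')).1 := by
        intro a b b'
        have h := congrFun (congrFun h1 (φ (a, b)).1) (a, b)
        rw [hA, if_pos rfl] at h
        have hAP : (idKronOnesRow p q * Mn * ((1 : Matrix (Fin p) (Fin p) ℝ) ⊗ₖ
            (Matrix.of fun (_ _ : Fin q) => (1 : ℝ)))) (φ (a, b)).1 (a, b)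
            = ((Finset.univ.filter
                (fun b' : Fin q => (φ (a, b)).1 = (φ (a, b')).1)).card : ℝ) := by
          simp [Matrix.mul_apply, hA, Matrix.kroneckerMap_apply, Matrix.one_apply,
            Fintype.sum_prod_type, ite_and, Finset.sum_ite_eq, Finset.sum_ite_eq']
          rw [Finset.sum_comm]
          simp [Finset.sum_ite_eq']
        rw [Matrix.smul_apply, hAP, smul_eq_mul] at h
        have hc' : (Finset.univ.filter
            (fun b' : Fin q => (φ (a, b)).1 = (φ (a, b')).1)).card = q := by
          field_simp at h; exact_mod_cast h.symm
        have huniv := Finset.eq_univ_of_card _ (by rw [hc', Fintype.card_fin])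
        simpa using Finset.eq_univ_iff_forall.mp huniv b'
      have hg : ∀ (b : Fin q) (a a' : Fin p), (φ (a, b)).2 = (φ (a', b)).2 := by
        intro b a a'
        have h := congrFun (congrFun h2 (φ (a, b)).2) (a, b)
        rw [hB, if_pos rfl] at h
        have hBP : (onesRowKronId p q * Mn * ((Matrix.of fun (_ _ : Fin p) => (1 : ℝ)) ⊗ₖ
            (1 : Matrix (Fin q) (Fin q) ℝ))) (φ (a, b)).2 (a, b)
            = ((Finset.univ.filter
                (fun a' : Fin p => (φ (a, b)).2 = (φ (a', b)).2)).card : ℝ) := by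
          simp [Matrix.mul_apply, hB, Matrix.kroneckerMap_apply, Matrix.one_apply,
            Fintype.sum_prod_type, ite_and, Finset.sum_ite_eq, Finset.sum_ite_eq']
        rw [Matrix.smul_apply, hBP, smul_eq_mul] at h
        have hc' : (Finset.univ.filter
            (fun a' : Fin p => (φ (a, b)).2 = (φ (a', b)).2)).card = p := by
          field_simp at h; exact_mod_cast h.symm
        have huniv := Finset.eq_univ_of_card _ (by rw [hc', Fintype.card_fin])
        simpa using Finset.eq_univ_iff_forall.mp huniv a'
      set b0 : Fin q := ⟨0, hq⟩
      set a0 : Fin p := ⟨0, hp⟩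
      refine ⟨Matrix.of fun r a => if r = (φ (a, b0)).1 then (1 : ℝ) else 0,
        Matrix.of fun s b => if s = (φ (a0, b)).2 then (1 : ℝ) else 0,
        fun a => ⟨(φ (a, b0)).1, fun r => rfl⟩,
        fun b => ⟨(φ (a0, b)).2, fun s => rfl⟩, ?_, ?_, ?_⟩
      · ext ⟨i, j⟩ ⟨a, b⟩
        rw [hφ]
        have e1 : (φ (a, b0)).1 = (φ (a, b)).1 := hf a b0 b
        have e2 : (φ (a0, b)).2 = (φ (a, b)).2 := hg b a0 a
        simp only [Matrix.kroneckerMap_apply, Matrix.of_apply, e1, e2, Prod.ext_iff]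
        by_cases h1 : i = (φ (a, b)).1 <;> by_cases h2 : j = (φ (a, b)).2 <;>
          simp [h1, h2]
      · ext r ⟨a, b⟩
        rw [hA]
        simp only [Matrix.mul_apply, Matrix.of_apply, idKronOnesRow_apply, mul_ite,
          mul_one, mul_zero]
        rw [Finset.sum_ite_eq' Finset.univ a
          (fun a' => if r = (φ (a', b0)).1 then (1 : ℝ) else 0)]
        simp [hf a b0 b]
      · ext s ⟨a, b⟩
        rw [hB]
        simp only [Matrix.mul_apply, Matrix.of_apply, onesRowKronId_apply, mul_ite,
          mul_one, mul_zero]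
        rw [Finset.sum_ite_eq' Finset.univ b
          (fun b' => if s = (φ (a0, b')).2 then (1 : ℝ) else 0)]
        simp [hg b a0 a]
  · intro Mn1 Mn2 _ _ _ hE1 hE2
    constructor
    · rw [hE1, Matrix.mul_assoc, row_mul_col_q, Matrix.mul_smul, Matrix.mul_one,
        smul_smul, inv_mul_cancel₀ hq', one_smul]
    · rw [hE2, Matrix.mul_assoc, row_mul_col_p, Matrix.mul_smul, Matrix.mul_one,
        smul_smul, inv_mul_cancel₀ hp', one_smul]
end
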